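/- arXiv:1906.07680 — 4 statements merged into one kernel-verified Lean document; each statement's English description precedes it below -/
import Mathlib

section
/- Let Γ be a connected simple graph with vertex set V and graph distance d, let φ : V → V be nonexpanding for d (d(φ(u),φ(v)) ≤ d(u,v) for all u,v), and let A be a group acting on V by graph automorphisms of Γ. Suppose there is a vertex v₀ with φ(v₀) = v₀ and a·v₀ = v₀ for every a ∈ A, and suppose that for every n ∈ ℕ the ball {v ∈ V : d(v,v₀) ≤ n} meets only finitely many A-orbits. Then every vertex is preperiodic modulo A: for every v ∈ V there exist m ≥ 0, r ≥ 1, and a ∈ A with φ^{m+r}(v) = a · φ^{m}(v). -/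
/-- Let `Γ` be a connected simple graph with graph distance `d`, let
`φ : V → V` be nonexpanding for `d`, and let a group `A` act on `V` by graph automorphisms.
Suppose `v₀` is fixed by `φ` and by every element of `A`, and every ball around `v₀` meets
only finitely many `A`-orbits.  Then every vertex is preperiodic modulo `A`: for every `v`
there exist `m ≥ 0`, `r ≥ 1`, and `a ∈ A` with `φ^[m+r] v = a • φ^[m] v`. -/
theorem preperiodic_modulo_group {V : Type*} (G : SimpleGraph V) (hconn : G.Connected)
    (φ : V → V) (hne : ∀ u v : V, G.dist (φ u) (φ v) ≤ G.dist u v)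
    (A : Type*) [Group A] [MulAction A V]
    (haut : ∀ (a : A) (u v : V), G.Adj u v ↔ G.Adj (a • u) (a • v))
    (v₀ : V) (hfix : φ v₀ = v₀) (hfixA : ∀ a : A, a • v₀ = v₀)
    (hfin : ∀ n : ℕ,
      (Quotient.mk (MulAction.orbitRel A V) '' {v : V | G.dist v v₀ ≤ n}).Finite) :
    ∀ v : V, ∃ (m r : ℕ) (a : A), 1 ≤ r ∧ φ^[m + r] v = a • φ^[m] v := by
  intro v
  set N := G.dist v v₀ with hN
  have hball : ∀ n : ℕ, G.dist (φ^[n] v) v₀ ≤ N := by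
    intro n
    induction n with
    | zero => simp [hN]
    | succ n ih =>
      have := hne (φ^[n] v) v₀
      rw [hfix] at this
      rw [Function.iterate_succ_apply']
      exact le_trans this ih
  set f : ℕ → Quotient (MulAction.orbitRel A V) :=
    fun n => Quotient.mk _ (φ^[n] v) with hf
  have hrange : Set.range f ⊆
      (Quotient.mk (MulAction.orbitRel A V) '' {w : V | G.dist w v₀ ≤ N}) := by
    rintro x ⟨n, rfl⟩
    exact ⟨φ^[n] v, hball n, rfl⟩
  have hfinr : (Set.range f).Finite := (hfin N).subset hrange
  have hni : ¬ Function.Injective f := by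
    intro hinj
    exact Set.infinite_range_of_injective hinj hfinr
  rw [Function.not_injective_iff] at hni
  obtain ⟨i, j, hij, hne'⟩ := hni
  -- wlog j < i
  rcases lt_or_gt_of_ne hne' with h | h
  · -- i < j : use m = i, r = j - i
    have : f j = f i := hij.symm
    have horb := Quotient.exact this
    obtain ⟨a, ha⟩ := horb
    exact ⟨i, j - i, a, by omega, by
      have : i + (j - i) = j := by omega
      rw [this]; exact ha.symm⟩
  · have horb := Quotient.exact hij
    obtain ⟨a, ha⟩ := horb
    exact ⟨j, i - j, a, by omega, by
      have : j + (i - j) = i := by omega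
      rw [this]; exact ha.symm⟩
end

section
/- Let f : ℂ → ℂ be the cubic polynomial f(z) = z³ − (3/4)z + (√7/4)i. The critical points of f (the roots of f′(z) = 3z² − 3/4) are 1/2 and −1/2. Moreover f(1/2) = (−1 + i√7)/4, f((−1 + i√7)/4) = 1/2, f(−1/2) = (1 + i√7)/4, and f((1 + i√7)/4) = −1/2. Hence each critical point of f is periodic of period 2, and the post-critical set of f equals {1/2, −1/2, (−1 + i√7)/4, (1 + i√7)/4}, a set with exactly four elements. -/
/-!
With `w = i√7`, so that `w² = -7`, the map is `f z = z³ - (3/4) z + w/4`. Its critical points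
`±1/2` are exchanged with `(∓1 + w)/4` by `f`; each verification reduces to
`(±1 + w)³ ≡ ∓20 - 4w` modulo `w² + 7`. So both critical points lie on 2-cycles, the
post-critical set is the union of those two cycles, and its four points are distinct because
`w` is not an integer (`w² = -7 < 0`).
-/

open Function Set

theorem Function.IsPeriodicPt.range_iterate_of_two {α : Type*} {f : α → α} {x : α}
    (h : IsPeriodicPt f 2 x) : range (fun k : ℕ => f^[k] x) = {x, f x} := by
  ext y
  constructor
  · rintro ⟨k, rfl⟩
    show f^[k] x ∈ _
    rw [← h.iterate_mod_apply]
    rcases Nat.mod_two_eq_zero_or_one k with hk | hk <;> simp [hk]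
  · rintro (rfl | rfl)
    exacts [⟨0, rfl⟩, ⟨1, rfl⟩]

section Rabbit

variable {K : Type*} [Field K] [CharZero K] {w : K}

theorem setOf_three_mul_sq_sub_eq_zero :
    {z : K | 3 * z ^ 2 - 3 / 4 = 0} = {1 / 2, -(1 / 2)} := by
  ext z
  simp only [mem_ofPred_eq, mem_insert_iff, mem_singleton_iff]
  rw [show 3 * z ^ 2 - 3 / 4 = 3 * (z ^ 2 - (1 / 2) ^ 2) by ring, mul_eq_zero,
    or_iff_right three_ne_zero, sub_eq_zero, sq_eq_sq_iff_eq_or_eq_neg]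

theorem ne_intCast_of_sq_eq_neg_seven (hw : w ^ 2 = -7) (a : ℤ) : w ≠ a := by
  rintro rfl
  have h : ((a ^ 2 : ℤ) : K) = ((-7 : ℤ) : K) := by push_cast; exact hw
  linarith [Int.cast_injective h, sq_nonneg a]

theorem ncard_rabbit_postcritical (hw : w ^ 2 = -7) :
    ({1 / 2, -(1 / 2), (-1 + w) / 4, (1 + w) / 4} : Set K).ncard = 4 := by
  have hne := ne_intCast_of_sq_eq_neg_seven hw
  refine ncard_eq_four.mpr ⟨_, _, _, _, ?_, ?_, ?_, ?_, ?_, ?_, rfl⟩ <;> intro h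
  · norm_num at h
  · exact hne 3 (by push_cast; linear_combination -4 * h)
  · exact hne 1 (by push_cast; linear_combination -4 * h)
  · exact hne (-1) (by push_cast; linear_combination -4 * h)
  · exact hne (-3) (by push_cast; linear_combination -4 * h)
  · have : (2 : K) = 0 := by linear_combination -4 * h
    norm_num at this

variable {f : K → K} (hf : ∀ z, f z = z ^ 3 - 3 / 4 * z + w / 4)
include hf

theorem rabbit_apply_half : f (1 / 2) = (-1 + w) / 4 := by
  rw [hf]; ring

theorem rabbit_apply_neg_half : f (-(1 / 2)) = (1 + w) / 4 := by
  rw [hf]; ring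

variable (hw : w ^ 2 = -7)
include hw

theorem rabbit_apply_neg_one_add : f ((-1 + w) / 4) = 1 / 2 := by
  rw [hf]; linear_combination (w - 3) / 64 * hw

theorem rabbit_apply_one_add : f ((1 + w) / 4) = -(1 / 2) := by
  rw [hf]; linear_combination (w + 3) / 64 * hw

theorem rabbit_isPeriodicPt_half : IsPeriodicPt f 2 (1 / 2) := by
  show f (f (1 / 2)) = 1 / 2
  rw [rabbit_apply_half hf, rabbit_apply_neg_one_add hf hw]

theorem rabbit_isPeriodicPt_neg_half : IsPeriodicPt f 2 (-(1 / 2)) := by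
  show f (f (-(1 / 2))) = -(1 / 2)
  rw [rabbit_apply_neg_half hf, rabbit_apply_one_add hf hw]

theorem rabbit_postcritical_eq :
    (range fun k : ℕ => f^[k] (f (1 / 2))) ∪ (range fun k : ℕ => f^[k] (f (-(1 / 2)))) =
      {1 / 2, -(1 / 2), (-1 + w) / 4, (1 + w) / 4} := by
  rw [(rabbit_isPeriodicPt_half hf hw).apply.range_iterate_of_two,
    (rabbit_isPeriodicPt_neg_half hf hw).apply.range_iterate_of_two,
    rabbit_apply_half hf, rabbit_apply_neg_one_add hf hw,
    rabbit_apply_neg_half hf, rabbit_apply_one_add hf hw]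
  ext z
  simp only [mem_union, mem_insert_iff, mem_singleton_iff]
  tauto

end Rabbit

/-- Let `f z = z³ - (3/4) z + (√7/4) i`.  The critical points of `f` (the
roots of `f' z = 3 z² - 3/4`) are `1/2` and `-1/2`.  Moreover `f (1/2) = (-1 + i√7)/4`,
`f ((-1 + i√7)/4) = 1/2`, `f (-1/2) = (1 + i√7)/4` and `f ((1 + i√7)/4) = -1/2`.  Hence each
critical point of `f` is periodic of period 2, and the post-critical set of `f` (the union of
the forward orbits of the critical values) equals
`{1/2, -1/2, (-1 + i√7)/4, (1 + i√7)/4}`, a set with exactly four elements. -/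
theorem cubic_rabbit_postcritical (f : ℂ → ℂ)
    (hf : ∀ z, f z = z ^ 3 - (3 / 4) * z + ((Real.sqrt 7 : ℂ) / 4) * Complex.I) :
    ({z : ℂ | 3 * z ^ 2 - 3 / 4 = 0} = {1 / 2, -(1 / 2)}) ∧
    f (1 / 2) = (-1 + (Real.sqrt 7 : ℂ) * Complex.I) / 4 ∧
    f ((-1 + (Real.sqrt 7 : ℂ) * Complex.I) / 4) = 1 / 2 ∧
    f (-(1 / 2)) = (1 + (Real.sqrt 7 : ℂ) * Complex.I) / 4 ∧
    f ((1 + (Real.sqrt 7 : ℂ) * Complex.I) / 4) = -(1 / 2) ∧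
    f^[2] (1 / 2) = 1 / 2 ∧
    f^[2] (-(1 / 2)) = -(1 / 2) ∧
    ((Set.range fun k : ℕ => f^[k] (f (1 / 2))) ∪
        (Set.range fun k : ℕ => f^[k] (f (-(1 / 2)))) =
      {1 / 2, -(1 / 2), (-1 + (Real.sqrt 7 : ℂ) * Complex.I) / 4,
        (1 + (Real.sqrt 7 : ℂ) * Complex.I) / 4}) ∧
    ({1 / 2, -(1 / 2), (-1 + (Real.sqrt 7 : ℂ) * Complex.I) / 4,
        (1 + (Real.sqrt 7 : ℂ) * Complex.I) / 4} : Set ℂ).ncard = 4 := by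
  have hw : ((Real.sqrt 7 : ℂ) * Complex.I) ^ 2 = -7 := by
    rw [mul_pow, ← Complex.ofReal_pow, Real.sq_sqrt (by norm_num), Complex.I_sq]
    push_cast; ring
  have hf' : ∀ z, f z = z ^ 3 - 3 / 4 * z + (Real.sqrt 7 : ℂ) * Complex.I / 4 := fun z => by
    rw [hf]; ring
  exact ⟨setOf_three_mul_sq_sub_eq_zero, rabbit_apply_half hf',
    rabbit_apply_neg_one_add hf' hw, rabbit_apply_neg_half hf', rabbit_apply_one_add hf' hw,
    rabbit_isPeriodicPt_half hf' hw, rabbit_isPeriodicPt_neg_half hf' hw,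
    rabbit_postcritical_eq hf' hw, ncard_rabbit_postcritical hw⟩
end

section
/- Define F : ℤ → ℤ by F(m) = m/4 if m ≡ 0 (mod 4), F(m) = (m − 3)/4 if m ≡ 3 (mod 4), and F(m) = m if m ≡ 1 or 2 (mod 4). Then: (a) for every m ∈ ℤ the sequence F^k(m) is eventually constant, i.e., there exists k with F^{k+1}(m) = F^k(m); (b) if every iterate F^k(m) is congruent to 0 or 3 mod 4, then the eventual constant value is 0 when m ≥ 0 and is −1 when m < 0; (c) if some iterate F^k(m) is congruent to 1 or 2 mod 4, then the eventual constant value is congruent to 1 or 2 mod 4. In particular, for every m exactly one of the following holds: the orbit of m under F stabilizes at 0, stabilizes at −1, or stabilizes at an integer congruent to 1 or 2 mod 4. -/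
/-- The reduction map of the twisted rabbit problem: `F m = m/4` if `m ≡ 0 (mod 4)`,
`F m = (m-3)/4` if `m ≡ 3 (mod 4)`, and `F m = m` if `m ≡ 1, 2 (mod 4)`. -/
def twistedRabbitStep (m : ℤ) : ℤ :=
  if m % 4 = 0 then m / 4
  else if m % 4 = 3 then (m - 3) / 4
  else m

/-- `m` stabilizes at `v` under iteration of `twistedRabbitStep`. -/
def StabilizesAt (m v : ℤ) : Prop :=
  ∃ N : ℕ, ∀ k : ℕ, N ≤ k → twistedRabbitStep^[k] m = v

/-!
Away from its fixed points, `F` strictly decreases `|2m + 1|`, so every orbit reaches a fixed point;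
the fixed points are `0`, `-1` and the integers `≡ 1, 2 (mod 4)`. `F` preserves the sign of `m`, so an
orbit that never meets the classes `1, 2 (mod 4)` ends at `0` or at `-1` according to the sign of `m`.
-/

open Function

section Iterate

variable {α : Type*} {f : α → α}

theorem iterate_eq_of_isFixedPt_iterate {x : α} {k j : ℕ} (h : IsFixedPt f (f^[k] x)) (hkj : k ≤ j) :
    f^[j] x = f^[k] x := by
  obtain ⟨i, rfl⟩ := Nat.exists_eq_add_of_le hkj
  rw [add_comm, iterate_add_apply, (h.iterate i).eq]

theorem exists_isFixedPt_iterate_of_lt (μ : α → ℕ) (hμ : ∀ x, f x ≠ x → μ (f x) < μ x) (x : α) :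
    ∃ k, IsFixedPt f (f^[k] x) := by
  induction hn : μ x using Nat.strong_induction_on generalizing x with
  | _ n ih =>
    by_cases hx : f x = x
    · exact ⟨0, hx⟩
    · obtain ⟨k, hk⟩ := ih _ (hn ▸ hμ x hx) (f x) rfl
      exact ⟨k + 1, by rwa [iterate_succ_apply]⟩

end Iterate

theorem twistedRabbitStep_eq_self_iff (v : ℤ) :
    twistedRabbitStep v = v ↔ v = 0 ∨ v = -1 ∨ v % 4 = 1 ∨ v % 4 = 2 := by
  unfold twistedRabbitStep; split_ifs <;> omega

theorem twistedRabbitStep_nonneg_iff (m : ℤ) : 0 ≤ twistedRabbitStep m ↔ 0 ≤ m := by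
  unfold twistedRabbitStep; split_ifs <;> omega

theorem natAbs_two_mul_twistedRabbitStep_add_one_lt (m : ℤ) (h : twistedRabbitStep m ≠ m) :
    (2 * twistedRabbitStep m + 1).natAbs < (2 * m + 1).natAbs := by
  unfold twistedRabbitStep at *; split_ifs at * <;> omega

theorem iterate_twistedRabbitStep_nonneg_iff (m : ℤ) (k : ℕ) :
    0 ≤ twistedRabbitStep^[k] m ↔ 0 ≤ m := by
  induction k with
  | zero => rfl
  | succ k ih => rw [iterate_succ_apply', twistedRabbitStep_nonneg_iff, ih]

theorem exists_isFixedPt_iterate_twistedRabbitStep (m : ℤ) :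
    ∃ k, IsFixedPt twistedRabbitStep (twistedRabbitStep^[k] m) :=
  exists_isFixedPt_iterate_of_lt (fun m => (2 * m + 1).natAbs)
    natAbs_two_mul_twistedRabbitStep_add_one_lt m

theorem stabilizesAt_iterate_of_isFixedPt {m : ℤ} {k : ℕ}
    (h : IsFixedPt twistedRabbitStep (twistedRabbitStep^[k] m)) :
    StabilizesAt m (twistedRabbitStep^[k] m) :=
  ⟨k, fun _ hj => iterate_eq_of_isFixedPt_iterate h hj⟩

theorem StabilizesAt.unique {m v w : ℤ} (hv : StabilizesAt m v) (hw : StabilizesAt m w) :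
    v = w := by
  obtain ⟨N, hN⟩ := hv
  obtain ⟨M, hM⟩ := hw
  rw [← hN (max N M) (le_max_left _ _), hM (max N M) (le_max_right _ _)]

theorem stabilizesAt_of_forall_mod_four
    (m : ℤ) (h : ∀ k : ℕ, twistedRabbitStep^[k] m % 4 = 0 ∨ twistedRabbitStep^[k] m % 4 = 3) :
    (0 ≤ m → StabilizesAt m 0) ∧ (m < 0 → StabilizesAt m (-1)) := by
  obtain ⟨k, hk⟩ := exists_isFixedPt_iterate_twistedRabbitStep m
  have hstab := stabilizesAt_iterate_of_isFixedPt hk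
  have hfix := (twistedRabbitStep_eq_self_iff _).1 hk
  have hsign := iterate_twistedRabbitStep_nonneg_iff m k
  have hmod := h k
  constructor
  · intro hm
    rwa [show twistedRabbitStep^[k] m = 0 by omega] at hstab
  · intro hm
    rwa [show twistedRabbitStep^[k] m = -1 by omega] at hstab

theorem exists_stabilizesAt_of_exists_mod_four
    (m : ℤ) (h : ∃ k : ℕ, twistedRabbitStep^[k] m % 4 = 1 ∨ twistedRabbitStep^[k] m % 4 = 2) :
    ∃ v : ℤ, (v % 4 = 1 ∨ v % 4 = 2) ∧ StabilizesAt m v := by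
  obtain ⟨k, hk⟩ := h
  have hfix : IsFixedPt twistedRabbitStep (twistedRabbitStep^[k] m) :=
    (twistedRabbitStep_eq_self_iff _).2 (.inr (.inr hk))
  exact ⟨_, hk, stabilizesAt_iterate_of_isFixedPt hfix⟩

/-- (a) Every orbit of `F = twistedRabbitStep` is eventually constant.
(b) If every iterate of `m` is `≡ 0` or `3 (mod 4)`, then the eventual constant value is `0`
when `m ≥ 0` and `-1` when `m < 0`.  (c) If some iterate is `≡ 1` or `2 (mod 4)`, then the
eventual constant value is `≡ 1` or `2 (mod 4)`.  In particular, for every `m` exactly one of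
the following holds: the orbit stabilizes at `0`, stabilizes at `-1`, or stabilizes at an
integer congruent to `1` or `2 (mod 4)`. -/
theorem twistedRabbit_reduction_trichotomy :
    (∀ m : ℤ, ∃ k : ℕ, twistedRabbitStep^[k + 1] m = twistedRabbitStep^[k] m) ∧
    (∀ m : ℤ,
      (∀ k : ℕ, twistedRabbitStep^[k] m % 4 = 0 ∨ twistedRabbitStep^[k] m % 4 = 3) →
        ((0 ≤ m → StabilizesAt m 0) ∧ (m < 0 → StabilizesAt m (-1)))) ∧
    (∀ m : ℤ,
      (∃ k : ℕ, twistedRabbitStep^[k] m % 4 = 1 ∨ twistedRabbitStep^[k] m % 4 = 2) →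
        ∃ v : ℤ, (v % 4 = 1 ∨ v % 4 = 2) ∧ StabilizesAt m v) ∧
    (∀ m : ℤ,
      (StabilizesAt m 0 ∧ ¬ StabilizesAt m (-1) ∧
          ¬ ∃ v : ℤ, (v % 4 = 1 ∨ v % 4 = 2) ∧ StabilizesAt m v) ∨
      (¬ StabilizesAt m 0 ∧ StabilizesAt m (-1) ∧
          ¬ ∃ v : ℤ, (v % 4 = 1 ∨ v % 4 = 2) ∧ StabilizesAt m v) ∨
      (¬ StabilizesAt m 0 ∧ ¬ StabilizesAt m (-1) ∧
          ∃ v : ℤ, (v % 4 = 1 ∨ v % 4 = 2) ∧ StabilizesAt m v)) := by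
  refine ⟨fun m => ?_, stabilizesAt_of_forall_mod_four, exists_stabilizesAt_of_exists_mod_four,
    fun m => ?_⟩
  · obtain ⟨k, hk⟩ := exists_isFixedPt_iterate_twistedRabbitStep m
    exact ⟨k, by rw [iterate_succ_apply', hk.eq]⟩
  have h0 {v} (hv : v % 4 = 1 ∨ v % 4 = 2) (h : StabilizesAt m v) : ¬ StabilizesAt m 0 :=
    fun h' => by have := h.unique h'; omega
  have h1 {v} (hv : v % 4 = 1 ∨ v % 4 = 2) (h : StabilizesAt m v) : ¬ StabilizesAt m (-1) :=
    fun h' => by have := h.unique h'; omega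
  by_cases hc : ∃ k : ℕ, twistedRabbitStep^[k] m % 4 = 1 ∨ twistedRabbitStep^[k] m % 4 = 2
  · obtain ⟨v, hv, hst⟩ := exists_stabilizesAt_of_exists_mod_four m hc
    exact .inr (.inr ⟨h0 hv hst, h1 hv hst, v, hv, hst⟩)
  have hall : ∀ k : ℕ, twistedRabbitStep^[k] m % 4 = 0 ∨ twistedRabbitStep^[k] m % 4 = 3 := by
    intro k
    have := not_exists.1 hc k
    omega
  obtain ⟨hpos, hneg⟩ := stabilizesAt_of_forall_mod_four m hall
  rcases le_or_gt 0 m with hm | hm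
  · have hst := hpos hm
    exact .inl ⟨hst, fun h => by have := hst.unique h; omega,
      fun ⟨v, hv, h⟩ => h0 hv h hst⟩
  · have hst := hneg hm
    exact .inr (.inl ⟨fun h => by have := hst.unique h; omega, hst,
      fun ⟨v, hv, h⟩ => h1 hv h hst⟩)
end

section
/- Define F : ℤ → ℤ by F(m) = m/4 if m ≡ 0 (mod 4), F(m) = (m − 3)/4 if m ≡ 3 (mod 4), and F(m) = m if m ≡ 1 or 2 (mod 4). For every natural number m, the following are equivalent: (i) for every k ≥ 0, the iterate F^k(m) is congruent to 0 or 3 mod 4 (equivalently, the orbit of m under F stabilizes at 0); (ii) every digit of the base-4 expansion of m is 0 or 3. -/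
lemma twistedRabbitStep_nat (m : ℕ) (h : m % 4 = 0 ∨ m % 4 = 3) :
    twistedRabbitStep (m : ℤ) = ((m / 4 : ℕ) : ℤ) := by
  unfold twistedRabbitStep
  split_ifs with h1 h2 <;> omega

/-- For every natural number `m`, every iterate of `m` under
`F = twistedRabbitStep` is congruent to `0` or `3 (mod 4)` if and only if every digit of the
base-4 expansion of `m` is `0` or `3`. -/
theorem twistedRabbit_digits_characterization (m : ℕ) :
    (∀ k : ℕ, twistedRabbitStep^[k] (m : ℤ) % 4 = 0 ∨
        twistedRabbitStep^[k] (m : ℤ) % 4 = 3) ↔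
    (∀ d ∈ Nat.digits 4 m, d = 0 ∨ d = 3) := by
  induction m using Nat.strong_induction_on with
  | _ m ih =>
  rcases Nat.eq_zero_or_pos m with rfl | hm
  · constructor
    · intro _ d hd
      simp at hd
    · intro _ k
      have h0 : twistedRabbitStep^[k] (0 : ℤ) = 0 := by
        induction k with
        | zero => simp
        | succ k ihk =>
          rw [Function.iterate_succ_apply', ihk]
          unfold twistedRabbitStep
          norm_num
      rw [Nat.cast_zero, h0]
      left; norm_num
  · have hdig : Nat.digits 4 m = m % 4 :: Nat.digits 4 (m / 4) :=
      Nat.digits_def' (by norm_num) hm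
    have hlt : m / 4 < m := Nat.div_lt_self hm (by norm_num)
    constructor
    · intro h
      have h0 := h 0
      simp only [Function.iterate_zero_apply] at h0
      have hm4 : m % 4 = 0 ∨ m % 4 = 3 := by omega
      have hrec : ∀ k, twistedRabbitStep^[k] ((m / 4 : ℕ) : ℤ) =
          twistedRabbitStep^[k + 1] (m : ℤ) := fun k => by
        rw [Function.iterate_succ_apply, twistedRabbitStep_nat m hm4]
      have htail := (ih (m / 4) hlt).1 (fun k => by rw [hrec k]; exact h (k + 1))
      rw [hdig]
      intro d hd
      rcases List.mem_cons.1 hd with rfl | hd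
      · exact hm4
      · exact htail d hd
    · intro h
      have hm4 : m % 4 = 0 ∨ m % 4 = 3 :=
        h (m % 4) (by rw [hdig]; exact List.mem_cons_self)
      have htail : ∀ d ∈ Nat.digits 4 (m / 4), d = 0 ∨ d = 3 := fun d hd =>
        h d (by rw [hdig]; exact List.mem_cons_of_mem _ hd)
      intro k
      cases k with
      | zero => simp only [Function.iterate_zero_apply]; omega
      | succ k =>
        rw [Function.iterate_succ_apply, twistedRabbitStep_nat m hm4]
        exact (ih (m / 4) hlt).2 htail k
end
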